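/- For any initial point (α⁰,β⁰) ∈ Δ, writing (α^{(m)},β^{(m)}) = F^m(α⁰,β⁰), the sequence {α^{(m)} + β^{(m)}}_{m≥1} is monotone non-increasing and hence convergent. -/
import Mathlib


noncomputable def Fop : ℝ × ℝ → ℝ × ℝ := fun p =>
  ((6*p.2 + 3*p.1 + 4*p.1*p.2)/(6 + 3*p.1),
   (3*p.1 + 4*p.1*p.2)/(6 + 6*p.2 + 3*p.1 + 4*p.1*p.2))

def Dset : Set (ℝ × ℝ) := {p | 0 ≤ p.1 ∧ p.1 ≤ 4 ∧ 0 ≤ p.2 ∧ p.2 ≤ 1}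

def Dgood : Set (ℝ × ℝ) :=
  {p | 0 ≤ p.1 ∧ p.1 ≤ 2 ∧ 0 ≤ p.2 ∧ p.2 ≤ 1 ∧ p.2 ≤ p.1}

lemma maps_Dset {p : ℝ × ℝ} (hp : p ∈ Dset) : Fop p ∈ Dgood := by
  obtain ⟨h1, h2, h3, h4⟩ := hp
  simp only [Fop]
  set a := p.1; set b := p.2
  have hd1 : (0:ℝ) < 6 + 3*a := by linarith
  have hd2 : (0:ℝ) < 6 + 6*b + 3*a + 4*a*b := by nlinarith
  refine ⟨?_, ?_, ?_, ?_, ?_⟩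
  · exact div_nonneg (by nlinarith) hd1.le
  · rw [div_le_iff₀ hd1]; nlinarith
  · exact div_nonneg (by nlinarith) hd2.le
  · rw [div_le_iff₀ hd2]; nlinarith
  · rw [div_le_div_iff₀ hd2 hd1]
    exact mul_le_mul (by nlinarith) (by nlinarith) (by linarith) (by nlinarith)

lemma Dgood_sub : Dgood ⊆ Dset := by
  rintro p ⟨h1, h2, h3, h4, h5⟩; exact ⟨h1, by linarith, h3, h4⟩

lemma maps_Dgood {p : ℝ × ℝ} (hp : p ∈ Dgood) : Fop p ∈ Dgood :=
  maps_Dset (Dgood_sub hp)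

lemma decr {p : ℝ × ℝ} (hp : p ∈ Dgood) :
    (Fop p).1 + (Fop p).2 ≤ p.1 + p.2 := by
  obtain ⟨h1, h2, h3, h4, h5⟩ := hp
  simp only [Fop]
  set a := p.1; set b := p.2
  have hd1 : (0:ℝ) < 6 + 3*a := by linarith
  have hd2 : (0:ℝ) < 6 + 6*b + 3*a + 4*a*b := by nlinarith
  show _ / _ + _ / _ ≤ a + b
  rw [div_add_div _ _ (ne_of_gt hd1) (ne_of_gt hd2), div_le_iff₀ (by positivity)]
  nlinarith [sq_nonneg (a-b), sq_nonneg (a*b), sq_nonneg b, sq_nonneg (a*b - b),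
    mul_nonneg h1 h3, mul_nonneg (mul_nonneg h1 h3) h3,
    mul_nonneg (mul_nonneg h1 h1) h3, mul_nonneg (sub_nonneg.2 h5) h3,
    mul_nonneg (mul_nonneg (sub_nonneg.2 h5) h3) h3,
    mul_nonneg (mul_nonneg (sub_nonneg.2 h5) h1) h3,
    mul_nonneg (mul_nonneg (sub_nonneg.2 h4) h1) h3]

lemma iter_mem {p : ℝ × ℝ} (hp : p ∈ Dset) (m : ℕ) :
    Fop^[m+1] p ∈ Dgood := by
  induction m with
  | zero => exact maps_Dset hp
  | succ n ih => rw [Function.iterate_succ_apply']; exact maps_Dgood ih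

theorem stmt14 : ∀ p ∈ Dset,
    (∀ m : ℕ, 1 ≤ m →
      (Fop^[m+1] p).1 + (Fop^[m+1] p).2 ≤ (Fop^[m] p).1 + (Fop^[m] p).2) ∧
    (∃ L : ℝ, Filter.Tendsto (fun m => (Fop^[m+1] p).1 + (Fop^[m+1] p).2)
      Filter.atTop (nhds L)) := by
  intro p hp
  have key : ∀ m : ℕ, (Fop^[m+1+1] p).1 + (Fop^[m+1+1] p).2 ≤
      (Fop^[m+1] p).1 + (Fop^[m+1] p).2 := by
    intro m
    have h := iter_mem hp m
    have := decr h
    rwa [Function.iterate_succ_apply' Fop (m+1)] at *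
  constructor
  · intro m hm
    obtain ⟨n, rfl⟩ := Nat.exists_eq_add_of_le hm
    simpa [Nat.add_comm] using key n
  · refine ⟨⨅ m, ((Fop^[m+1] p).1 + (Fop^[m+1] p).2), ?_⟩
    apply tendsto_atTop_ciInf
    · exact antitone_nat_of_succ_le key
    · refine ⟨0, ?_⟩
      rintro x ⟨m, rfl⟩
      have h := iter_mem hp m
      rw [Function.iterate_succ_apply] at h
      obtain ⟨h1, _, h3, _⟩ := h
      dsimp
      linarith
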